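/- Let x = (X_1,…,X_k) and y = (Y_1,…,Y_m) be two samples generated by stationary ergodic process distributions ρ_x and ρ_y respectively (the two sequences need not be independent of each other, but each has a stationary ergodic marginal distribution). Then, with probability 1, the empirical distributional distance between the samples converges to the distributional distance between the distributions: lim_{k,m→∞} d̂((X_1,…,X_k),(Y_1,…,Y_m)) = d(ρ_x,ρ_y) almost surely. -/

import Mathlib

open MeasureTheory Filter Topology

namespace Paper

variable {A : Type*} [MeasurableSpace A]

/-- The left shift on one-sided infinite sequences. -/
def shift (x : ℕ → A) : ℕ → A := fun n => x (n + 1)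

/-- A process distribution is stationary if it is invariant under the left shift. -/
def Stationary (ρ : Measure (ℕ → A)) : Prop := Measure.map shift ρ = ρ

/-- A set of sequences depends only on the first `k` coordinates. -/
def DependsOn (B : Set (ℕ → A)) (k : ℕ) : Prop :=
  ∀ x y : ℕ → A, (∀ i < k, x i = y i) → (x ∈ B ↔ y ∈ B)

/-- Empirical frequency `ν(X_{1..n}, B)` of the `k`-dimensional event `B` in the
first `n` symbols of `x` (0 when `n < k`). -/
noncomputable def freq (B : Set (ℕ → A)) (k n : ℕ) (x : ℕ → A) : ℝ :=
  if k ≤ n then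
    (∑ i ∈ Finset.range (n - k + 1), Set.indicator B (fun _ => (1 : ℝ)) fun j => x (i + j)) /
      ((n : ℝ) - k + 1)
  else 0

/-- Ergodicity: the empirical frequency of every finite-dimensional event converges
almost surely to a constant. -/
def ErgodicFreq (ρ : Measure (ℕ → A)) : Prop :=
  ∀ (k : ℕ) (B : Set (ℕ → A)), MeasurableSet B → DependsOn B k →
    ∃ c : ℝ, ∀ᵐ x ∂ρ, Tendsto (fun n => freq B k n x) atTop (𝓝 c)

/-- A stationary ergodic process distribution. -/
def StatErg (ρ : Measure (ℕ → A)) : Prop :=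
  IsProbabilityMeasure ρ ∧ Stationary ρ ∧ ErgodicFreq ρ

/-- A fixed sequence `(B_i)` of finite-dimensional cylinder events generating the Borel
σ-algebra of `A^∞`, with `dim i` the dimension of `B i`. -/
structure CylBasis (A : Type*) [MeasurableSpace A] where
  B : ℕ → Set (ℕ → A)
  dim : ℕ → ℕ
  dim_pos : ∀ i, 0 < dim i
  meas : ∀ i, MeasurableSet (B i)
  dep : ∀ i, DependsOn (B i) (dim i)
  gen : MeasurableSpace.generateFrom (Set.range B) = (inferInstance : MeasurableSpace (ℕ → A))

/-- Weights `w_i = 1/(i(i+1))` (indexing from 0: `w_i = 1/((i+1)(i+2))`). -/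
noncomputable def wt (i : ℕ) : ℝ := 1 / ((i + 1) * (i + 2))

/-- The distributional distance `d(ρ₁,ρ₂) = Σ_i w_i |ρ₁(B_i) − ρ₂(B_i)|`. -/
noncomputable def dd (𝓑 : CylBasis A) (ρ₁ ρ₂ : Measure (ℕ → A)) : ℝ :=
  ∑' i, wt i * |(ρ₁ (𝓑.B i)).toReal - (ρ₂ (𝓑.B i)).toReal|

/-- The empirical distributional distance `d̂` between the first `n` symbols of `x`
and the first `m` symbols of `y`. -/
noncomputable def hatd2 (𝓑 : CylBasis A) (n m : ℕ) (x y : ℕ → A) : ℝ :=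
  ∑' i, wt i * |freq (𝓑.B i) (𝓑.dim i) n x - freq (𝓑.B i) (𝓑.dim i) m y|

/-!
By stationarity every window indicator `x ↦ 1_B(x_i, …, x_{i+k-1})` has expectation `ρ(B)`, hence
so does the empirical frequency of `B`; by bounded convergence the almost sure constant limit that
ergodicity provides must therefore be `ρ(B)`. Applied to both marginals and to the countably many
cylinders `B_i`, this gives almost sure termwise convergence of the series defining `d̂`, whose
terms are dominated by the summable weights `w_i` (Tannery's theorem).
-/

lemma measurable_shift : Measurable (shift : (ℕ → A) → ℕ → A) :=
  measurable_pi_lambda _ fun n => measurable_pi_apply (n + 1)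

lemma iterate_shift_apply {α : Type*} (i : ℕ) (x : ℕ → α) :
    shift^[i] x = fun j => x (i + j) := by
  induction i generalizing x with
  | zero => simp
  | succ i ih =>
    funext j
    rw [Function.iterate_succ_apply, ih]
    simp only [shift, Nat.add_right_comm i 1 j, Nat.add_assoc]

lemma Stationary.measurePreserving_iterate {ρ : Measure (ℕ → A)} (h : Stationary ρ) (i : ℕ) :
    MeasurePreserving (shift^[i]) ρ ρ :=
  (MeasurePreserving.mk measurable_shift h).iterate i

lemma freq_of_le {α : Type*} (B : Set (ℕ → α)) {k n : ℕ} (x : ℕ → α) (hkn : k ≤ n) :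
    freq B k n x =
      (∑ i ∈ Finset.range (n - k + 1), (shift^[i] ⁻¹' B).indicator 1 x) / (n - k + 1 : ℕ) := by
  simp only [freq, if_pos hkn, Nat.cast_add, Nat.cast_sub hkn, Nat.cast_one]
  congr 1
  refine Finset.sum_congr rfl fun i _ => ?_
  rw [← iterate_shift_apply, ← Set.indicator_comp_right]
  rfl

lemma freq_mem_Icc {α : Type*} (B : Set (ℕ → α)) (k n : ℕ) (x : ℕ → α) :
    freq B k n x ∈ Set.Icc 0 1 := by
  by_cases hkn : k ≤ n
  · rw [freq_of_le B x hkn]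
    have hsum := Finset.sum_le_card_nsmul (Finset.range (n - k + 1))
      (fun i => (shift^[i] ⁻¹' B).indicator (1 : (ℕ → α) → ℝ) x) 1 fun i _ =>
        Set.indicator_apply_le' (fun _ => le_rfl) (fun _ => zero_le_one)
    rw [Finset.card_range, nsmul_one] at hsum
    have hsum₀ :
        0 ≤ ∑ i ∈ Finset.range (n - k + 1), (shift^[i] ⁻¹' B).indicator (1 : (ℕ → α) → ℝ) x :=
      Finset.sum_nonneg fun i _ => Set.indicator_nonneg (fun _ _ => zero_le_one) _
    exact ⟨div_nonneg hsum₀ (Nat.cast_nonneg _), div_le_one_of_le₀ hsum (Nat.cast_nonneg _)⟩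
  · simp [freq, hkn]

lemma measurable_freq {B : Set (ℕ → A)} (hB : MeasurableSet B) (k n : ℕ) :
    Measurable (freq B k n) := by
  by_cases hkn : k ≤ n
  · rw [show freq B k n = _ from funext fun x => freq_of_le B x hkn]
    exact Finset.measurable_sum _ (fun i _ => measurable_const.indicator
      ((measurable_shift.iterate i) hB)) |>.div_const _
  · rw [show freq B k n = fun _ => 0 from funext fun _ => if_neg hkn]
    exact measurable_const

lemma integral_freq {ρ : Measure (ℕ → A)} [IsFiniteMeasure ρ] (h : Stationary ρ)
    {B : Set (ℕ → A)} (hB : MeasurableSet B) {k n : ℕ} (hkn : k ≤ n) :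
    ∫ x, freq B k n x ∂ρ = (ρ B).toReal := by
  have hpre (i : ℕ) : MeasurableSet (shift^[i] ⁻¹' B) := (measurable_shift.iterate i) hB
  simp only [freq_of_le B _ hkn]
  rw [integral_div, integral_finsetSum _ fun i _ => (integrable_const 1).indicator (hpre i)]
  simp only [integral_indicator_one (hpre _),
    (h.measurePreserving_iterate _).measureReal_preimage hB.nullMeasurableSet,
    Finset.sum_const, Finset.card_range, nsmul_eq_mul]
  field_simp
  rfl

lemma StatErg.ae_tendsto_freq {ρ : Measure (ℕ → A)} (h : StatErg ρ) {B : Set (ℕ → A)} {k : ℕ}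
    (hB : MeasurableSet B) (hBk : DependsOn B k) :
    ∀ᵐ x ∂ρ, Tendsto (fun n => freq B k n x) atTop (𝓝 (ρ B).toReal) := by
  obtain ⟨hprob, hstat, herg⟩ := h
  obtain ⟨c, hc⟩ := herg k B hB hBk
  have hc_int : Tendsto (fun n => ∫ x, freq B k n x ∂ρ) atTop (𝓝 c) := by
    simpa using tendsto_integral_of_dominated_convergence (fun _ => 1)
      (fun n => (measurable_freq hB k n).aestronglyMeasurable) (integrable_const 1)
      (fun n => ae_of_all _ fun x => abs_le.2
        ⟨by linarith [(freq_mem_Icc B k n x).1], (freq_mem_Icc B k n x).2⟩) hc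
  have hB_int : Tendsto (fun n => ∫ x, freq B k n x ∂ρ) atTop (𝓝 (ρ B).toReal) :=
    tendsto_const_nhds.congr' <| (eventually_ge_atTop k).mono fun n hn =>
      (integral_freq hstat hB hn).symm
  rwa [tendsto_nhds_unique hc_int hB_int] at hc

lemma CylBasis.ae_tendsto_freq (𝓑 : CylBasis A) {ρ : Measure (ℕ → A)} (h : StatErg ρ) :
    ∀ᵐ x ∂ρ, ∀ i,
      Tendsto (fun n => freq (𝓑.B i) (𝓑.dim i) n x) atTop (𝓝 (ρ (𝓑.B i)).toReal) :=
  ae_all_iff.2 fun i => h.ae_tendsto_freq (𝓑.meas i) (𝓑.dep i)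

lemma wt_nonneg (i : ℕ) : 0 ≤ wt i := by unfold wt; positivity

lemma summable_wt : Summable wt := by
  have hsq : Summable fun i : ℕ => 1 / ((i : ℝ) + 1) ^ 2 := by
    simpa using (summable_nat_add_iff 1).2 (Real.summable_one_div_nat_pow.2 one_lt_two)
  refine hsq.of_nonneg_of_le wt_nonneg fun i => one_div_le_one_div_of_le (by positivity) ?_
  nlinarith

lemma tendsto_tsum_mul_abs_sub {α β ι : Type*} {l₁ : Filter α} {l₂ : Filter β}
    {w : ι → ℝ} (hw : Summable w) (hw₀ : ∀ i, 0 ≤ w i) {u : α → ι → ℝ} {v : β → ι → ℝ}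
    {a b : ι → ℝ} (hu : ∀ n i, u n i ∈ Set.Icc 0 1) (hv : ∀ m i, v m i ∈ Set.Icc 0 1)
    (hua : ∀ i, Tendsto (u · i) l₁ (𝓝 (a i))) (hvb : ∀ i, Tendsto (v · i) l₂ (𝓝 (b i))) :
    Tendsto (fun nm : α × β => ∑' i, w i * |u nm.1 i - v nm.2 i|) (l₁ ×ˢ l₂)
      (𝓝 (∑' i, w i * |a i - b i|)) := by
  refine tendsto_tsum_of_dominated_convergence hw
    (fun i => ((((hua i).comp tendsto_fst).sub ((hvb i).comp tendsto_snd)).abs.const_mul (w i)))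
    (Eventually.of_forall fun nm i => ?_)
  have hdiff : |u nm.1 i - v nm.2 i| ≤ 1 := by
    simpa using abs_sub_le_of_le_of_le (hu nm.1 i).1 (hu nm.1 i).2 (hv nm.2 i).1 (hv nm.2 i).2
  rw [norm_mul, Real.norm_of_nonneg (hw₀ i), Real.norm_of_nonneg (abs_nonneg _)]
  exact mul_le_of_le_one_right (hw₀ i) hdiff

theorem empirical_distance_consistent_general (𝓑 : CylBasis A)
    (P : Measure ((ℕ → A) × (ℕ → A)))
    (ρx ρy : Measure (ℕ → A))
    (hmx : P.map Prod.fst = ρx) (hmy : P.map Prod.snd = ρy)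
    (hx : StatErg ρx) (hy : StatErg ρy) :
    ∀ᵐ ω ∂P,
      Tendsto (fun km : ℕ × ℕ => hatd2 𝓑 km.1 km.2 ω.1 ω.2) atTop (𝓝 (dd 𝓑 ρx ρy)) := by
  subst hmx hmy
  filter_upwards [ae_of_ae_map measurable_fst.aemeasurable (𝓑.ae_tendsto_freq hx),
    ae_of_ae_map measurable_snd.aemeasurable (𝓑.ae_tendsto_freq hy)] with ω hωx hωy
  rw [← prod_atTop_atTop_eq]
  exact tendsto_tsum_mul_abs_sub (u := fun n i => freq (𝓑.B i) (𝓑.dim i) n ω.1)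
    (v := fun m i => freq (𝓑.B i) (𝓑.dim i) m ω.2) summable_wt wt_nonneg
    (fun _ _ => freq_mem_Icc _ _ _ _) (fun _ _ => freq_mem_Icc _ _ _ _) hωx hωy

/-- If two (possibly dependent) samples are generated by stationary ergodic
process distributions `ρx` and `ρy`, then with probability 1 the empirical distributional
distance between the samples converges to `d(ρx,ρy)` as both sample lengths go to infinity. -/
theorem empirical_distance_consistent (𝓑 : CylBasis A)
    (P : Measure ((ℕ → A) × (ℕ → A))) [IsProbabilityMeasure P]
    (ρx ρy : Measure (ℕ → A))
    (hmx : P.map Prod.fst = ρx) (hmy : P.map Prod.snd = ρy)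
    (hx : StatErg ρx) (hy : StatErg ρy) :
    ∀ᵐ ω ∂P,
      Tendsto (fun km : ℕ × ℕ => hatd2 𝓑 km.1 km.2 ω.1 ω.2) atTop (𝓝 (dd 𝓑 ρx ρy)) :=
  empirical_distance_consistent_general 𝓑 P ρx ρy hmx hmy hx hy

end Paper
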